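/- arXiv:2109.02037 — 2 statements merged into one kernel-verified Lean document; each statement's English description precedes it below -/
import Mathlib

section
/- Let R be a commutative ring, I an ideal, and a ∈ R with a ∉ I. If both the ideal (I, a) generated by I and a, and the ideal quotient (I : a) = {r ∈ R : ra ∈ I}, are principal ideals, then I is principal. -/
/-!
Write `I + (a) = (b)` and `(I : a) = (c)`. Since `I ⊆ (b)`, every element of `I` is `r b` with
`r ∈ (I : b)`, so `I = b (I : b)`. Colon by `b` is colon by the ideal `(b) = I + (a)`, and colon by
`I` is everything, so `(I : b) = (I : a) = (c)`. Hence `I = (b c)`.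
-/

namespace Ideal

variable {R : Type*} [CommSemiring R]

theorem colon_sup_span_singleton (I : Ideal R) (a : R) :
    I.colon ((I ⊔ span {a} : Ideal R) : Set R) = I.colon {a} := by
  rw [← I.span_eq, ← span_union, colon_span, Submodule.colon_union, span_eq,
    (Submodule.colon_eq_top_iff_subset _).mpr le_rfl, top_inf_eq]

theorem eq_span_mul_of_le_span_singleton {I : Ideal R} {b c : R} (hIb : I ≤ span {b})
    (hc : I.colon {b} = span {c}) : I = span {c * b} := by
  have hcolon (r : R) : r * b ∈ I ↔ r ∈ span {c} := by
    rw [← hc, Submodule.mem_colon_singleton, smul_eq_mul]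
  refine le_antisymm (fun x hx ↦ ?_) ?_
  · obtain ⟨r, rfl⟩ := mem_span_singleton'.mp (hIb hx)
    obtain ⟨s, rfl⟩ := mem_span_singleton'.mp ((hcolon r).mp hx)
    exact mem_span_singleton'.mpr ⟨s, (mul_assoc s c b).symm⟩
  · rw [span_singleton_le_iff_mem, hcolon]
    exact mem_span_singleton_self c

end Ideal

theorem stmt_7_general {R : Type*} [CommRing R] (I : Ideal R) (a : R)
    (h1 : ∃ b : R, I ⊔ Ideal.span {a} = Ideal.span {b})
    (h2 : ∃ c : R, ∀ r : R, r ∈ Ideal.span {c} ↔ r * a ∈ I) :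
    ∃ d : R, I = Ideal.span {d} := by
  obtain ⟨b, hb⟩ := h1
  obtain ⟨c, hc⟩ := h2
  have hcolon : I.colon {b} = Ideal.span {c} := by
    rw [← Ideal.colon_span, ← hb, Ideal.colon_sup_span_singleton]
    ext r
    rw [Submodule.mem_colon_singleton, smul_eq_mul, hc]
  exact ⟨c * b, Ideal.eq_span_mul_of_le_span_singleton (hb ▸ le_sup_left) hcolon⟩

theorem stmt_7 {R : Type*} [CommRing R] (I : Ideal R) (a : R) (ha : a ∉ I)
    (h1 : ∃ b : R, I ⊔ Ideal.span {a} = Ideal.span {b})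
    (h2 : ∃ c : R, ∀ r : R, r ∈ Ideal.span {c} ↔ r * a ∈ I) :
    ∃ d : R, I = Ideal.span {d} :=
  stmt_7_general I a h1 h2
end

section
/- Every principal ideal domain admits a Dedekind–Hasse norm. -/
/-!
Take `f r = Ω(r) + 1` for `r ≠ 0`, where `Ω` counts prime factors with multiplicity, and `f 0 = 0`;
additivity of `Ω` gives `f a ≤ f (a * b)`. If `b ∤ a`, the generator `d = a x + b y` of the ideal
`(a, b)` is a proper divisor of `b`, so `b = d c` with `c` a nonzero nonunit, and `Ω(b) = Ω(d) + Ω(c)`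
forces `0 < f d < f b`.
-/

open UniqueFactorizationMonoid

section

variable {α : Type*} [CommMonoidWithZero α] [UniqueFactorizationMonoid α]

theorem UniqueFactorizationMonoid.card_factors_mul {a b : α} (ha : a ≠ 0) (hb : b ≠ 0) :
    Multiset.card (factors (a * b)) = Multiset.card (factors a) + Multiset.card (factors b) := by
  rw [Multiset.card_eq_card_of_rel (factors_mul ha hb), Multiset.card_add]

theorem UniqueFactorizationMonoid.card_factors_pos {a : α} (ha : a ≠ 0) (hu : ¬IsUnit a) :
    0 < Multiset.card (factors a) :=
  Multiset.card_pos.mpr ((factors_pos ha).mpr hu).ne'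

open Classical in
noncomputable def factorNorm (r : α) : ℕ :=
  if r = 0 then 0 else Multiset.card (factors r) + 1

theorem factorNorm_eq_zero_iff {r : α} : factorNorm r = 0 ↔ r = 0 := by
  by_cases hr : r = 0 <;> simp [factorNorm, hr]

theorem factorNorm_of_ne_zero {r : α} (hr : r ≠ 0) :
    factorNorm r = Multiset.card (factors r) + 1 :=
  if_neg hr

theorem factorNorm_mul {a b : α} (ha : a ≠ 0) (hb : b ≠ 0) :
    factorNorm (a * b) = factorNorm a + Multiset.card (factors b) := by
  rw [factorNorm_of_ne_zero (mul_ne_zero ha hb), factorNorm_of_ne_zero ha, card_factors_mul ha hb]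
  ring

theorem factorNorm_le_mul {a b : α} (ha : a ≠ 0) (hb : b ≠ 0) : factorNorm a ≤ factorNorm (a * b) :=
  (factorNorm_mul ha hb).symm ▸ Nat.le_add_right _ _

theorem factorNorm_lt_of_dvd_of_not_dvd {d b : α} (hb : b ≠ 0) (hdb : d ∣ b) (hbd : ¬b ∣ d) :
    factorNorm d < factorNorm b := by
  obtain ⟨c, rfl⟩ := hdb
  have hd : d ≠ 0 := left_ne_zero_of_mul hb
  have hc : c ≠ 0 := right_ne_zero_of_mul hb
  have hcu : ¬IsUnit c := fun hu => hbd (hu.mul_right_dvd.mpr dvd_rfl)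
  rw [factorNorm_mul hd hc]
  exact Nat.lt_add_of_pos_right (card_factors_pos hc hcu)

end

def IsDedekindHasseNorm {R : Type*} [CommRing R] (f : R → ℕ) : Prop :=
  (∀ r : R, f r = 0 ↔ r = 0) ∧
    (∀ a b : R, a ≠ 0 → b ≠ 0 →
      b ∣ a ∨ ∃ x y : R, 0 < f (a * x + b * y) ∧ f (a * x + b * y) < f b) ∧
    (∀ a b : R, a ≠ 0 → b ≠ 0 → f a ≤ f (a * b))

theorem isDedekindHasseNorm_factorNorm {R : Type*} [CommRing R] [IsDomain R] [IsBezout R]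
    [UniqueFactorizationMonoid R] : IsDedekindHasseNorm (factorNorm : R → ℕ) := by
  refine ⟨fun _ => factorNorm_eq_zero_iff, fun a b _ hb => ?_, fun a b => factorNorm_le_mul⟩
  refine or_iff_not_imp_left.mpr fun hba => ?_
  obtain ⟨x, y, hxy⟩ := IsBezout.gcd_eq_sum a b
  have hdb := IsBezout.gcd_dvd_right a b
  have hbd : ¬b ∣ IsBezout.gcd a b := fun h => hba (h.trans (IsBezout.gcd_dvd_left a b))
  refine ⟨x, y, ?_, ?_⟩ <;> rw [mul_comm a, mul_comm b, hxy]
  · exact Nat.pos_of_ne_zero (mt factorNorm_eq_zero_iff.mp (ne_zero_of_dvd_ne_zero hb hdb))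
  · exact factorNorm_lt_of_dvd_of_not_dvd hb hdb hbd

theorem stmt_11 {R : Type*} [CommRing R] [IsDomain R] [IsPrincipalIdealRing R] :
    ∃ f : R → ℕ,
      (∀ r : R, f r = 0 ↔ r = 0) ∧
      (∀ a b : R, a ≠ 0 → b ≠ 0 →
        b ∣ a ∨ ∃ x y : R, 0 < f (a * x + b * y) ∧ f (a * x + b * y) < f b) ∧
      (∀ a b : R, a ≠ 0 → b ≠ 0 → f a ≤ f (a * b)) :=
  ⟨factorNorm, isDedekindHasseNorm_factorNorm⟩
end
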